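/- arXiv:1108.2780 — 2 statements merged into one kernel-verified Lean document; each statement's English description precedes it below -/
import Mathlib

section
/- Let A ∈ M(n,ℤ) be invertible over ℚ with the vector of charges q = A⁻¹e (e the all-ones vector), and suppose the charges sum to 1. Let J_W = ⟨q mod ℤ^n⟩ ⊆ A⁻¹ℤ^n/ℤ^n. Then the transpose group J_Wᵀ equals SL(Wᵀ), the subgroup of (Aᵀ)⁻¹ℤ^n/ℤ^n consisting of elements whose coordinates sum to an integer. -/
open Matrix QuotientAddGroup

noncomputable section

def IntLat (n : ℕ) : AddSubgroup (Fin n → ℚ) where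
  carrier := {v | ∀ i, ∃ m : ℤ, v i = (m : ℚ)}
  add_mem' := by
    intro a b ha hb i
    obtain ⟨p, hp⟩ := ha i
    obtain ⟨q, hq⟩ := hb i
    exact ⟨p + q, by simp [hp, hq]⟩
  zero_mem' := fun i => ⟨0, by simp⟩
  neg_mem' := by
    intro a ha i
    obtain ⟨p, hp⟩ := ha i
    exact ⟨-p, by simp [hp]⟩

abbrev QuotLat (n : ℕ) := (Fin n → ℚ) ⧸ IntLat n

def ratMat {n : ℕ} (A : Matrix (Fin n) (Fin n) ℤ) : Matrix (Fin n) (Fin n) ℚ :=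
  A.map ((↑) : ℤ → ℚ)

def AutW {n : ℕ} (A : Matrix (Fin n) (Fin n) ℤ) : AddSubgroup (QuotLat n) :=
  (AddSubgroup.comap (ratMat A).mulVecLin.toAddMonoidHom (IntLat n)).map
    (QuotientAddGroup.mk' (IntLat n))

def ZinQ : AddSubgroup ℚ := (Int.castAddHom ℚ).range

def sumHom (n : ℕ) : (Fin n → ℚ) →+ ℚ :=
  AddMonoidHom.mk' (fun v => ∑ i, v i) (by
    intro a b
    simpa using Finset.sum_add_distrib)

def qsum (n : ℕ) : QuotLat n →+ ℚ ⧸ ZinQ :=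
  QuotientAddGroup.lift (IntLat n) ((QuotientAddGroup.mk' ZinQ).comp (sumHom n)) (by
    intro v hv
    have hv' : ∀ i, ∃ m : ℤ, v i = (m : ℚ) := hv
    choose m hm using hv'
    have hmem : (∑ i, v i) ∈ ZinQ := ⟨∑ i, m i, by push_cast [hm]; simp⟩
    simpa [sumHom] using (QuotientAddGroup.eq_zero_iff _).mpr hmem)

def SLW {n : ℕ} (A : Matrix (Fin n) (Fin n) ℤ) : AddSubgroup (QuotLat n) :=
  AutW A ⊓ (qsum n).ker

def WellFormedWeights {n : ℕ} (w : Fin n → ℤ) (d : ℤ) : Prop :=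
  (∀ i, Finset.gcd (Finset.univ.erase i) w = 1) ∧
  ∀ i j, i ≠ j → ((Finset.gcd ((Finset.univ.erase i).erase j) w) ∣ d)

lemma ratMat_mul {n : ℕ} (M N : Matrix (Fin n) (Fin n) ℤ) :
    ratMat (M * N) = ratMat M * ratMat N := by
  simpa [ratMat] using (Matrix.map_mul (f := Int.castRingHom ℚ) (L := M) (M := N))

lemma ratMat_transpose {n : ℕ} (M : Matrix (Fin n) (Fin n) ℤ) :
    ratMat Mᵀ = (ratMat M)ᵀ := Matrix.transpose_map

lemma dot_int {n : ℕ} {a b : Fin n → ℚ} (ha : a ∈ IntLat n) (hb : b ∈ IntLat n) :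
    a ⬝ᵥ b ∈ ZinQ := by
  choose p hp using ha
  choose r hr using hb
  refine ⟨∑ i, p i * r i, ?_⟩
  simp only [Int.coe_castAddHom, dotProduct]
  push_cast
  exact Finset.sum_congr rfl fun i _ => by rw [hp, hr]

lemma mulVec_int {n : ℕ} (M : Matrix (Fin n) (Fin n) ℤ) {v : Fin n → ℚ}
    (hv : v ∈ IntLat n) : (ratMat M).mulVec v ∈ IntLat n := by
  choose p hp using hv
  intro i
  refine ⟨∑ j, M i j * p j, ?_⟩
  simp only [ratMat, Matrix.mulVec, dotProduct, Matrix.map_apply]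
  push_cast
  exact Finset.sum_congr rfl fun j _ => by rw [hp]

lemma mem_AutW_iff {n : ℕ} (M : Matrix (Fin n) (Fin n) ℤ) (v : Fin n → ℚ) :
    QuotientAddGroup.mk' (IntLat n) v ∈ AutW M ↔ (ratMat M).mulVec v ∈ IntLat n := by
  constructor
  · rintro ⟨u, hu, huv⟩
    obtain ⟨z, hz, hzeq⟩ := (QuotientAddGroup.mk'_eq_mk' (IntLat n)).mp huv
    have : (ratMat M).mulVec v = (ratMat M).mulVec u + (ratMat M).mulVec z := by
      rw [← Matrix.mulVec_add, hzeq]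
    rw [this]
    exact (IntLat n).add_mem hu (mulVec_int M hz)
  · intro h
    exact ⟨v, h, rfl⟩

/-- J_Wᵀ = SL(Wᵀ): the transpose of the cyclic group J_W generated
by the charge vector q = A⁻¹e equals the subgroup of (Aᵀ)⁻¹ℤ^n/ℤ^n of elements
with integral coordinate sum.  Here J_W = C₀⁻¹ℤ^n/ℤ^n with A = B₀C₀, and
J_Wᵀ = (B₀ᵀ)⁻¹ℤ^n/ℤ^n. -/
theorem stmt_15 (n : ℕ) (A B₀ C₀ : Matrix (Fin n) (Fin n) ℤ)
    (hA : A.det ≠ 0) (hB₀ : B₀.det ≠ 0) (hC₀ : C₀.det ≠ 0)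
    (hfact : A = B₀ * C₀)
    (q : Fin n → ℚ) (hqdef : q = (ratMat A)⁻¹.mulVec 1)
    (hq1 : ∑ i, q i = 1)
    (d : ℕ) (hd : 0 < d) (w : Fin n → ℤ)
    (hw : ∀ i, (w i : ℚ) = (d : ℚ) * q i)
    (hprim : Finset.univ.gcd w = 1)
    (hJ : ∀ v : Fin n → ℚ, (ratMat C₀).mulVec v ∈ IntLat n ↔
      QuotientAddGroup.mk' (IntLat n) v ∈
        AddSubgroup.zmultiples (QuotientAddGroup.mk' (IntLat n) q)) :
    AutW B₀ᵀ = SLW Aᵀ := by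
  -- basic facts
  have hdetA : IsUnit (ratMat A).det := by
    have : (ratMat A).det = (A.det : ℚ) := by
      simpa [ratMat] using (RingHom.map_det (Int.castRingHom ℚ) A).symm
    rw [this]
    exact isUnit_iff_ne_zero.mpr (by exact_mod_cast hA)
  have hAq : (ratMat A).mulVec q = 1 := by
    rw [hqdef, Matrix.mulVec_mulVec, Matrix.mul_nonsing_inv _ hdetA, Matrix.one_mulVec]
  have hAT : ratMat Aᵀ = ratMat C₀ᵀ * ratMat B₀ᵀ := by
    rw [← ratMat_mul, ← Matrix.transpose_mul, ← hfact]
  have hCq : (ratMat C₀).mulVec q ∈ IntLat n :=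
    (hJ q).mpr (AddSubgroup.mem_zmultiples _)
  -- key dot product identity: ∑ v = ((ratMat C₀) *ᵥ q) ⬝ᵥ ((ratMat B₀ᵀ) *ᵥ v)
  have key : ∀ v : Fin n → ℚ,
      ∑ i, v i = ((ratMat C₀).mulVec q) ⬝ᵥ ((ratMat B₀ᵀ).mulVec v) := by
    intro v
    rw [ratMat_transpose, Matrix.dotProduct_mulVec, Matrix.vecMul_transpose,
      Matrix.mulVec_mulVec, ← ratMat_mul, ← hfact, hAq]
    simp [dotProduct]
  ext x
  induction x using QuotientAddGroup.induction_on with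
  | H v =>
  rw [show ((v : QuotLat n)) = QuotientAddGroup.mk' (IntLat n) v from rfl]
  have hqsum : ∀ s : Fin n → ℚ,
      (QuotientAddGroup.mk' (IntLat n) s ∈ (qsum n).ker ↔ (∑ i, s i) ∈ ZinQ) := by
    intro s
    rw [AddMonoidHom.mem_ker]
    show QuotientAddGroup.mk' ZinQ (sumHom n s) = 0 ↔ _
    rw [QuotientAddGroup.mk'_apply, QuotientAddGroup.eq_zero_iff]
    rfl
  constructor
  · intro hv
    have h1 : (ratMat B₀ᵀ).mulVec v ∈ IntLat n := (mem_AutW_iff _ _).mp hv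
    refine ⟨(mem_AutW_iff _ _).mpr ?_, (hqsum v).mpr ?_⟩
    · rw [hAT, ← Matrix.mulVec_mulVec]
      exact mulVec_int C₀ᵀ h1
    · rw [key v]
      exact dot_int hCq h1
  · rintro ⟨hv1, hv2⟩
    have hm : (ratMat Aᵀ).mulVec v ∈ IntLat n := (mem_AutW_iff _ _).mp hv1
    have hsum : (∑ i, v i) ∈ ZinQ := (hqsum v).mp hv2
    set m := (ratMat Aᵀ).mulVec v with hmdef
    set u := (ratMat B₀ᵀ).mulVec v with hudef
    have hCu : (ratMat C₀ᵀ).mulVec u = m := by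
      rw [hudef, Matrix.mulVec_mulVec, ← hAT]
    -- q ⬝ᵥ m = ∑ v
    have hqm : q ⬝ᵥ m ∈ ZinQ := by
      have : q ⬝ᵥ m = ∑ i, v i := by
        rw [hmdef, ratMat_transpose, Matrix.dotProduct_mulVec, Matrix.vecMul_transpose, hAq]
        simp [dotProduct]
      rw [this]; exact hsum
    refine (mem_AutW_iff _ _).mpr ?_
    intro i
    -- x := C₀⁻¹ eᵢ ; then x = z + k • q with z integral
    have hdetC : IsUnit (ratMat C₀).det := by
      have : (ratMat C₀).det = (C₀.det : ℚ) := by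
        simpa [ratMat] using (RingHom.map_det (Int.castRingHom ℚ) C₀).symm
      rw [this]
      exact isUnit_iff_ne_zero.mpr (by exact_mod_cast hC₀)
    set x : Fin n → ℚ := (ratMat C₀)⁻¹.mulVec (Pi.single i 1) with hxdef
    have hCx : (ratMat C₀).mulVec x = Pi.single i 1 := by
      rw [hxdef, Matrix.mulVec_mulVec, Matrix.mul_nonsing_inv _ hdetC, Matrix.one_mulVec]
    have hxint : (ratMat C₀).mulVec x ∈ IntLat n := by
      rw [hCx]
      intro j
      by_cases h : j = i
      · subst h; exact ⟨1, by simp⟩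
      · exact ⟨0, by simp [Pi.single_apply, h]⟩
    obtain ⟨k, hk⟩ := AddSubgroup.mem_zmultiples_iff.mp ((hJ x).mp hxint)
    rw [← map_zsmul (QuotientAddGroup.mk' (IntLat n)) k q] at hk
    obtain ⟨z, hz, hzeq⟩ := (QuotientAddGroup.mk'_eq_mk' (IntLat n)).mp hk
    -- u i = m ⬝ᵥ x = m ⬝ᵥ (k•q) + m ⬝ᵥ z
    have hui : u i = m ⬝ᵥ x := by
      have h1 : u i = u ⬝ᵥ Pi.single i 1 := by simp [dotProduct, Pi.single_apply]
      rw [h1, ← hCx, ← hCu, ratMat_transpose, Matrix.mulVec_transpose,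
        Matrix.dotProduct_mulVec, ← Matrix.dotProduct_mulVec]
    have hfin : u i = (k : ℚ) * (q ⬝ᵥ m) + m ⬝ᵥ z := by
      rw [hui, ← hzeq, dotProduct_add]
      congr 1
      simp only [dotProduct, Pi.smul_apply, zsmul_eq_mul, Finset.mul_sum]
      exact Finset.sum_congr rfl fun j _ => by ring
    obtain ⟨a, ha⟩ := hqm
    obtain ⟨b, hb⟩ := dot_int hm hz
    simp only [Int.coe_castAddHom] at ha hb
    exact ⟨k * a + b, by show u i = _; rw [hfin, ← ha, ← hb]; push_cast; ring⟩
end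
end

section
/- Let A ∈ M(n,ℤ) be invertible over ℚ defining a Calabi–Yau potential with charges q = A⁻¹e summing to 1, weight vector w = dq ∈ ℤ^n primitive (d the least common denominator of the charges), and let dᵀ be the least common denominator of the charges qᵀ = (Aᵀ)⁻¹e of the transposed potential. Then the order of SL(W) = {a ∈ A⁻¹ℤ^n/ℤ^n : Σᵢ aᵢ ∈ ℤ} equals |det(A)|/dᵀ. -/
open Matrix QuotientAddGroup

noncomputable section

/-! The map `v ↦ A⁻¹v` sends `ℤⁿ` onto `A⁻¹ℤⁿ/ℤⁿ` with kernel `Aℤⁿ`, so `|A⁻¹ℤⁿ/ℤⁿ| = |det A|`.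
The coordinate sum of `A⁻¹v` is `qᵀ ⬝ v = (wᵀ ⬝ v)/dᵀ`; as `wᵀ` is primitive, the coordinate sum
maps `A⁻¹ℤⁿ/ℤⁿ` onto the subgroup of `ℚ/ℤ` generated by `1/dᵀ`, which has order `dᵀ`, and `SL(W)`
is the kernel of this map. -/

theorem AddSubgroup.card_inf_ker_mul_card_map {G K : Type*} [AddGroup G] [AddGroup K]
    (H : AddSubgroup G) (f : G →+ K) :
    Nat.card ↥(H ⊓ f.ker) * Nat.card ↥(H.map f) = Nat.card H := by
  rw [← AddSubgroup.relIndex_ker, ← AddSubgroup.relIndex_bot_left,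
    ← AddSubgroup.relIndex_bot_left, inf_comm, AddSubgroup.relIndex_inf_mul_relIndex, bot_inf_eq]

theorem Matrix.sum_inv_mulVec {ι R : Type*} [Fintype ι] [DecidableEq ι] [CommRing R]
    (M : Matrix ι ι R) (x : ι → R) : ∑ i, (M⁻¹ *ᵥ x) i = (Mᵀ⁻¹ *ᵥ 1) ⬝ᵥ x := by
  rw [← transpose_nonsing_inv, mulVec_transpose, ← dotProduct_mulVec, dotProduct,
    Finset.sum_congr rfl]
  intro i _
  rw [Pi.one_apply, one_mul]

theorem Matrix.inv_mulVec_eq_iff {ι K : Type*} [Fintype ι] [DecidableEq ι] [CommRing K]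
    {M : Matrix ι ι K} (hM : IsUnit M.det) {x y : ι → K} : M⁻¹ *ᵥ x = y ↔ x = M *ᵥ y := by
  constructor
  · rintro rfl
    rw [mulVec_mulVec, mul_nonsing_inv _ hM, one_mulVec]
  · rintro rfl
    rw [mulVec_mulVec, nonsing_inv_mul _ hM, one_mulVec]

theorem dotProduct_surjective_of_gcd_eq_one {ι : Type*} [Fintype ι] {w : ι → ℤ}
    (hw : Finset.univ.gcd w = 1) : Function.Surjective (w ⬝ᵥ ·) := by
  obtain ⟨g, hg⟩ := Finset.gcd_eq_sum_mul Finset.univ w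
  intro z
  refine ⟨z • g, ?_⟩
  change w ⬝ᵥ (z • g) = z
  rw [dotProduct_smul, dotProduct, ← hg, hw, smul_eq_mul, mul_one]

theorem AddMonoidHom.range_eq_zmultiples_of_apply_eq_dotProduct_smul {ι G : Type*} [Fintype ι]
    [AddCommGroup G] {w : ι → ℤ} (hw : Finset.univ.gcd w = 1) (f : (ι → ℤ) →+ G) (x : G)
    (hf : ∀ v, f v = (w ⬝ᵥ v) • x) : f.range = AddSubgroup.zmultiples x := by
  ext y
  simp only [AddMonoidHom.mem_range, hf, AddSubgroup.mem_zmultiples_iff]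
  exact (dotProduct_surjective_of_gcd_eq_one hw).exists (p := fun z => z • x = y) |>.symm

theorem dotProduct_intCast_eq_zsmul_inv {ι : Type*} [Fintype ι] {q : ι → ℚ} {d : ℕ} {w : ι → ℤ}
    (hw : ∀ i, (w i : ℚ) = d * q i) (hd : 0 < d) (v : ι → ℤ) :
    q ⬝ᵥ ((↑) ∘ v) = (w ⬝ᵥ v) • (d : ℚ)⁻¹ := by
  have hq : ∀ i, q i = (d : ℚ)⁻¹ * w i := fun i => by
    rw [hw, inv_mul_cancel_left₀ (by positivity)]
  simp only [dotProduct, hq, zsmul_eq_mul, Int.cast_sum, Int.cast_mul, Finset.sum_mul,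
    Function.comp_apply]
  exact Finset.sum_congr rfl fun i _ => by ring

theorem ZinQ_eq_zmultiples_one : ZinQ = AddSubgroup.zmultiples 1 := by
  ext x
  simp [ZinQ, AddSubgroup.mem_zmultiples_iff, eq_comm]

theorem addOrderOf_mk_inv_natCast {d : ℕ} (hd : 0 < d) :
    addOrderOf (mk' ZinQ (d : ℚ)⁻¹) = d := by
  let e : ℚ ⧸ ZinQ ≃+ AddCircle (1 : ℚ) := quotientAddEquivOfEq ZinQ_eq_zmultiples_one
  rw [← addOrderOf_injective e.toAddMonoidHom e.injective]
  have h := AddCircle.addOrderOf_div_of_gcd_eq_one (p := (1 : ℚ)) hd (Nat.gcd_one_left d)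
  rw [Nat.cast_one, one_div, mul_one] at h
  exact h

section Lattice

variable {n : ℕ} {A : Matrix (Fin n) (Fin n) ℤ}

theorem mem_intLat_iff {v : Fin n → ℚ} : v ∈ IntLat n ↔ ∃ u : Fin n → ℤ, (↑) ∘ u = v := by
  refine ⟨fun h => ?_, ?_⟩
  · obtain ⟨u, hu⟩ := Classical.skolem.mp h
    exact ⟨u, funext fun i => (hu i).symm⟩
  · rintro ⟨u, rfl⟩ i
    exact ⟨u i, rfl⟩

theorem ratMat_mulVec_intCast (A : Matrix (Fin n) (Fin n) ℤ) (v : Fin n → ℤ) :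
    ratMat A *ᵥ ((↑) ∘ v) = (↑) ∘ (A *ᵥ v) := by
  funext i
  exact ((Int.castRingHom ℚ).map_mulVec A v i).symm

theorem isUnit_det_ratMat (hA : A.det ≠ 0) : IsUnit (ratMat A).det := by
  have hdet : (ratMat A).det = (A.det : ℚ) := (RingHom.map_det (Int.castRingHom ℚ) A).symm
  rw [hdet, isUnit_iff_ne_zero]
  exact Int.cast_ne_zero.mpr hA

variable (A) in
def invLatticeMap : (Fin n → ℤ) →+ QuotLat n :=
  (mk' (IntLat n)).comp
    ((ratMat A)⁻¹.mulVecLin.toAddMonoidHom.comp ((Int.castAddHom ℚ).compLeft (Fin n)))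

theorem invLatticeMap_apply (v : Fin n → ℤ) :
    invLatticeMap A v = mk' (IntLat n) ((ratMat A)⁻¹ *ᵥ ((↑) ∘ v)) := rfl

theorem ker_invLatticeMap (hA : A.det ≠ 0) :
    (invLatticeMap A).ker = (LinearMap.range A.mulVecLin).toAddSubgroup := by
  ext v
  rw [AddMonoidHom.mem_ker, invLatticeMap_apply, QuotientAddGroup.mk'_apply,
    QuotientAddGroup.eq_zero_iff, mem_intLat_iff]
  simp only [Submodule.mem_toAddSubgroup, LinearMap.mem_range, mulVecLin_apply,
    eq_comm (b := _ *ᵥ _), inv_mulVec_eq_iff (isUnit_det_ratMat hA), ratMat_mulVec_intCast]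
  exact exists_congr fun u => Int.cast_injective.comp_left.eq_iff.trans eq_comm

theorem range_invLatticeMap (hA : A.det ≠ 0) : (invLatticeMap A).range = AutW A := by
  ext x
  simp only [AutW, AddMonoidHom.mem_range, AddSubgroup.mem_map, AddSubgroup.mem_comap,
    mem_intLat_iff, invLatticeMap_apply]
  constructor
  · rintro ⟨u, rfl⟩
    exact ⟨_, ⟨u, (inv_mulVec_eq_iff (isUnit_det_ratMat hA)).mp rfl⟩, rfl⟩
  · rintro ⟨y, ⟨u, hu⟩, rfl⟩
    exact ⟨u, congrArg _ ((inv_mulVec_eq_iff (isUnit_det_ratMat hA)).mpr hu)⟩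

theorem card_autW (hA : A.det ≠ 0) : Nat.card (AutW A) = A.det.natAbs := by
  rw [← range_invLatticeMap hA, ← Nat.card_congr (quotientKerEquivRange _).toEquiv,
    ker_invLatticeMap hA]
  let e := LinearEquiv.ofInjective A.mulVecLin (mulVec_injective_of_det_ne_zero hA)
  exact (Submodule.natAbs_det_equiv _ e).symm.trans
    (congrArg Int.natAbs (LinearMap.det_toLin' A))

theorem qsum_invLatticeMap (v : Fin n → ℤ) :
    qsum n (invLatticeMap A v) = mk' ZinQ ((ratMat Aᵀ)⁻¹ *ᵥ 1 ⬝ᵥ ((↑) ∘ v)) := by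
  unfold ratMat
  rw [invLatticeMap_apply, transpose_map, ← sum_inv_mulVec]
  rfl

end Lattice

theorem stmt_16_general (n : ℕ) (A : Matrix (Fin n) (Fin n) ℤ) (hA : A.det ≠ 0)
    (qT : Fin n → ℚ) (hqTdef : qT = (ratMat Aᵀ)⁻¹.mulVec 1)
    (dT : ℕ) (hdT : 0 < dT) (wT : Fin n → ℤ)
    (hwT : ∀ i, (wT i : ℚ) = (dT : ℚ) * qT i)
    (hprimT : Finset.univ.gcd wT = 1) :
    Nat.card (SLW A) = A.det.natAbs / dT := by
  have hrange : (AutW A).map (qsum n) = AddSubgroup.zmultiples (mk' ZinQ (dT : ℚ)⁻¹) := by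
    rw [← range_invLatticeMap hA, ← AddMonoidHom.range_comp]
    refine AddMonoidHom.range_eq_zmultiples_of_apply_eq_dotProduct_smul hprimT _ _ fun v => ?_
    rw [AddMonoidHom.comp_apply, qsum_invLatticeMap, ← hqTdef,
      dotProduct_intCast_eq_zsmul_inv hwT hdT, map_zsmul]
  have hcard := AddSubgroup.card_inf_ker_mul_card_map (AutW A) (qsum n)
  rw [hrange, Nat.card_zmultiples, addOrderOf_mk_inv_natCast hdT, card_autW hA] at hcard
  rw [SLW, ← hcard, Nat.mul_div_cancel _ hdT]

/-- |SL(W)| = |det A| / dᵀ, where dᵀ is the least common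
denominator of the charges of the transposed potential. -/
theorem stmt_16 (n : ℕ) (A : Matrix (Fin n) (Fin n) ℤ) (hA : A.det ≠ 0)
    (q : Fin n → ℚ) (hqdef : q = (ratMat A)⁻¹.mulVec 1)
    (hq1 : ∑ i, q i = 1)
    (d : ℕ) (hd : 0 < d) (w : Fin n → ℤ)
    (hw : ∀ i, (w i : ℚ) = (d : ℚ) * q i)
    (hprim : Finset.univ.gcd w = 1)
    (qT : Fin n → ℚ) (hqTdef : qT = (ratMat Aᵀ)⁻¹.mulVec 1)
    (dT : ℕ) (hdT : 0 < dT) (wT : Fin n → ℤ)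
    (hwT : ∀ i, (wT i : ℚ) = (dT : ℚ) * qT i)
    (hprimT : Finset.univ.gcd wT = 1) :
    Nat.card (SLW A) = A.det.natAbs / dT :=
  stmt_16_general n A hA qT hqTdef dT hdT wT hwT hprimT
end
end
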